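/- Let s ∈ (0,1), q ≥ 1, a < b with a,b ≥ 0, and f : ℝ → ℝ twice continuously differentiable with |f''|^q s-convex in the second sense on [a,b]. Set M(s) = 1/(s+3) and N(s) = 1/(s+3) − 2/(s+2) + 1/(s+1). Then for all x ∈ [a,b]: |(1/(b−a)) ∫_a^b f(t) dt − f(x) + ((2x−a−b)/2) f'(x)| ≤ (1/3)^{1−1/q} · (1/(2(b−a))) · [ (x−a)³ (M(s)|f''(x)|^q + N(s)|f''(a)|^q)^{1/q} + (b−x)³ (M(s)|f''(x)|^q + N(s)|f''(b)|^q)^{1/q} ]. -/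

import Mathlib

/-!
Integrating by parts twice on `[a, x]` and on `[x, b]` gives
`∫_a^b f - (b - a) f x + (b - a) (2x - a - b)/2 · f' x
  = ½ ((x - a)³ ∫₀¹ t² f''(t x + (1 - t) a) dt + (b - x)³ ∫₀¹ t² f''(t x + (1 - t) b) dt)`.
Each of the two integrals is bounded by the power-mean (weighted Hölder) inequality for the weight
`t²`, of total mass `1/3`, followed by the `s`-convexity of `|f''|^q` along the segment, whose
weighted integrals are `∫₀¹ t² tˢ = M(s)` and `∫₀¹ t² (1 - t)ˢ = N(s)`.
-/

open MeasureTheory Set intervalIntegral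

lemma integral_mul_le_rpow_integral_mul_rpow_integral_mul_rpow {α : Type*} [MeasurableSpace α]
    {μ : Measure α} {w g : α → ℝ} {q : ℝ} (hq : 1 ≤ q) (hw : ∀ x, 0 ≤ w x) (hg : ∀ x, 0 ≤ g x)
    (hwi : Integrable w μ) (hgm : AEStronglyMeasurable g μ)
    (hwgi : Integrable (fun x ↦ w x * g x ^ q) μ) :
    ∫ x, w x * g x ∂μ ≤ (∫ x, w x ∂μ) ^ (1 - 1 / q) * (∫ x, w x * g x ^ q ∂μ) ^ (1 / q) := by
  rcases hq.eq_or_lt with rfl | hq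
  · simp
  set p := q.conjExponent
  have hpq : p.HolderConjugate q := (Real.HolderConjugate.conjExponent hq).symm
  have hp_inv : 1 / p = 1 - 1 / q := by
    have := hpq.inv_add_inv_eq_one
    rw [one_div, one_div]; linarith
  set F : α → ℝ := fun x ↦ w x ^ (1 / p)
  set G : α → ℝ := fun x ↦ w x ^ (1 / q) * g x
  have hFp : ∀ x, F x ^ p = w x := fun x ↦ by
    rw [← Real.rpow_mul (hw x), one_div_mul_cancel hpq.ne_zero, Real.rpow_one]
  have hGq : ∀ x, G x ^ q = w x * g x ^ q := fun x ↦ by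
    rw [Real.mul_rpow (Real.rpow_nonneg (hw x) _) (hg x), ← Real.rpow_mul (hw x),
      one_div_mul_cancel hpq.symm.ne_zero, Real.rpow_one]
  have hFG : ∀ x, F x * G x = w x * g x := fun x ↦ by
    rw [← mul_assoc, ← Real.rpow_add' (hw x) (by rw [hpq.one_div_add_one_div]; simp),
      hpq.one_div_add_one_div, div_one, Real.rpow_one]
  have hF_nonneg : ∀ x, 0 ≤ F x := fun x ↦ Real.rpow_nonneg (hw x) _
  have hG_nonneg : ∀ x, 0 ≤ G x := fun x ↦ mul_nonneg (Real.rpow_nonneg (hw x) _) (hg x)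
  have hF : MemLp F (ENNReal.ofReal p) μ := by
    rw [← integrable_norm_rpow_iff _ (by simpa using hpq.pos) ENNReal.ofReal_ne_top,
      ENNReal.toReal_ofReal hpq.nonneg]
    · simpa [Real.norm_of_nonneg (hF_nonneg _), hFp] using hwi
    · exact (hwi.aemeasurable.pow_const _).aestronglyMeasurable
  have hG : MemLp G (ENNReal.ofReal q) μ := by
    rw [← integrable_norm_rpow_iff _ (by simpa using hpq.symm.pos) ENNReal.ofReal_ne_top,
      ENNReal.toReal_ofReal hpq.symm.nonneg]
    · simpa [Real.norm_of_nonneg (hG_nonneg _), hGq] using hwgi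
    · exact ((hwi.aemeasurable.pow_const _).mul hgm.aemeasurable).aestronglyMeasurable
  have holder := integral_mul_le_Lp_mul_Lq_of_nonneg hpq (.of_forall hF_nonneg)
    (.of_forall hG_nonneg) hF hG
  simpa only [hFG, hFp, hGq, hp_inv] using holder

section Beta

variable {s : ℝ}

lemma integral_rpow_zero_one (hs : -1 < s) : ∫ t in (0:ℝ)..1, t ^ s = 1 / (s + 1) := by
  rw [integral_rpow (.inl hs), Real.one_rpow, Real.zero_rpow (by linarith)]
  ring

lemma integral_sq_mul_rpow (hs : -1 < s) : ∫ t in (0:ℝ)..1, t ^ 2 * t ^ s = 1 / (s + 3) := by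
  have h : EqOn (fun t : ℝ ↦ t ^ 2 * t ^ s) (fun t ↦ t ^ (s + 2)) (uIcc 0 1) := fun t ht ↦ by
    rw [uIcc_of_le zero_le_one] at ht
    simp only [Real.rpow_add' ht.1 (by linarith : s + 2 ≠ 0), mul_comm]; norm_cast
  rw [integral_congr h, integral_rpow_zero_one (by linarith)]
  ring

lemma integral_sq_mul_one_sub_rpow (hs : -1 < s) :
    ∫ t in (0:ℝ)..1, t ^ 2 * (1 - t) ^ s = 1 / (s + 3) - 2 / (s + 2) + 1 / (s + 1) := by
  have h : EqOn (fun t : ℝ ↦ (1 - t) ^ 2 * t ^ s)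
      (fun t ↦ t ^ s - 2 * t ^ (s + 1) + t ^ (s + 2)) (uIcc 0 1) := fun t ht ↦ by
    rw [uIcc_of_le zero_le_one] at ht
    simp only [Real.rpow_add' ht.1 (by linarith : s + 2 ≠ 0),
      Real.rpow_add' ht.1 (by linarith : s + 1 ≠ 0), Real.rpow_one]
    norm_cast; ring
  have hint : ∀ r : ℝ, -1 < r → IntervalIntegrable (fun t : ℝ ↦ t ^ r) volume 0 1 :=
    fun r hr ↦ intervalIntegrable_rpow' hr
  have hs1 : -1 < s + 1 := by linarith
  have hs2 : -1 < s + 2 := by linarith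
  have hflip : ∫ t in (0:ℝ)..1, t ^ 2 * (1 - t) ^ s = ∫ t in (0:ℝ)..1, (1 - t) ^ 2 * t ^ s := by
    simpa using integral_comp_sub_left (fun t ↦ (1 - t) ^ 2 * t ^ s) (1 : ℝ) (a := 0) (b := 1)
  rw [hflip, integral_congr h,
    integral_add ((hint s hs).sub ((hint _ hs1).const_mul 2)) (hint _ hs2),
    integral_sub (hint s hs) ((hint _ hs1).const_mul 2), intervalIntegral.integral_const_mul,
    integral_rpow_zero_one hs, integral_rpow_zero_one hs1, integral_rpow_zero_one hs2]
  ring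

lemma intervalIntegrable_sq_mul_rpow (hs : -1 < s) :
    IntervalIntegrable (fun t : ℝ ↦ t ^ 2 * t ^ s) volume 0 1 :=
  (intervalIntegrable_rpow' hs).continuousOn_mul (continuousOn_pow 2)

lemma intervalIntegrable_sq_mul_one_sub_rpow (hs : -1 < s) :
    IntervalIntegrable (fun t : ℝ ↦ t ^ 2 * (1 - t) ^ s) volume 0 1 := by
  have := ((intervalIntegrable_rpow' hs (a := 0) (b := 1)).comp_sub_left 1).symm
  rw [sub_zero, sub_self] at this
  exact this.continuousOn_mul (continuousOn_pow 2)

end Beta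

lemma abs_integral_sq_mul_le {g : ℝ → ℝ} (hg : ContinuousOn g (Icc 0 1)) {q s A B : ℝ}
    (hq : 1 ≤ q) (hs : -1 < s) (hgq : ∀ t ∈ Icc (0:ℝ) 1, |g t| ^ q ≤ t ^ s * A + (1 - t) ^ s * B) :
    |∫ t in (0:ℝ)..1, t ^ 2 * g t|
      ≤ (1 / 3 : ℝ) ^ (1 - 1 / q)
        * (1 / (s + 3) * A + (1 / (s + 3) - 2 / (s + 2) + 1 / (s + 1)) * B) ^ (1 / q) := by
  have hgq_cont : ContinuousOn (fun t ↦ t ^ 2 * |g t| ^ q) (Icc 0 1) :=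
    (continuousOn_pow 2).mul (hg.abs.rpow_const fun _ _ ↦ .inr (by linarith))
  have hpower_mean := integral_mul_le_rpow_integral_mul_rpow_integral_mul_rpow
    (μ := volume.restrict (Ioc (0:ℝ) 1)) (w := fun t ↦ t ^ 2) (g := fun t ↦ |g t|) hq
    sq_nonneg (fun _ ↦ abs_nonneg _) (continuous_pow 2).integrableOn_Ioc
    ((hg.abs.mono Ioc_subset_Icc_self).aestronglyMeasurable measurableSet_Ioc)
    ((hgq_cont.integrableOn_Icc).mono_set Ioc_subset_Icc_self)
  have hweight : ∫ t in (0:ℝ)..1, t ^ 2 = 1 / 3 := by norm_num [integral_pow]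
  simp only [← intervalIntegral.integral_of_le zero_le_one, hweight] at hpower_mean
  have hA := (intervalIntegrable_sq_mul_rpow hs).mul_const A
  have hB := (intervalIntegrable_sq_mul_one_sub_rpow hs).mul_const B
  have hmono : ∫ t in (0:ℝ)..1, t ^ 2 * |g t| ^ q
      ≤ ∫ t in (0:ℝ)..1, t ^ 2 * t ^ s * A + t ^ 2 * (1 - t) ^ s * B :=
    integral_mono_on zero_le_one (hgq_cont.intervalIntegrable_of_Icc zero_le_one) (hA.add hB)
      fun t ht ↦ by nlinarith [hgq t ht, sq_nonneg t]
  rw [integral_add hA hB, intervalIntegral.integral_mul_const, intervalIntegral.integral_mul_const,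
    integral_sq_mul_rpow hs, integral_sq_mul_one_sub_rpow hs] at hmono
  calc |∫ t in (0:ℝ)..1, t ^ 2 * g t| ≤ ∫ t in (0:ℝ)..1, t ^ 2 * |g t| :=
        (abs_integral_le_integral_abs zero_le_one).trans_eq <|
          integral_congr fun t _ ↦ by simp only [abs_mul, abs_pow, sq_abs]
    _ ≤ _ := hpower_mean
    _ ≤ _ := by
        gcongr
        exact intervalIntegral.integral_nonneg zero_le_one fun t _ ↦ by positivity

section Identity

variable {f f' f'' : ℝ → ℝ}

lemma integral_eq_add_half_integral_sq_mul {α y : ℝ}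
    (hf : ∀ u ∈ uIcc α y, HasDerivAt f (f' u) u) (hf' : ∀ u ∈ uIcc α y, HasDerivAt f' (f'' u) u)
    (hf'' : ContinuousOn f'' (uIcc α y)) :
    ∫ u in α..y, f u
      = (y - α) * f y - (y - α) ^ 2 / 2 * f' y + 1 / 2 * ∫ u in α..y, (u - α) ^ 2 * f'' u := by
  have hfc : ContinuousOn f (uIcc α y) :=
    continuousOn_of_forall_continuousAt fun u hu ↦ (hf u hu).continuousAt
  have hint : IntervalIntegrable (fun u ↦ (u - α) ^ 2 * f'' u) volume α y :=
    (by fun_prop : ContinuousOn (fun u : ℝ ↦ (u - α) ^ 2) _).mul hf'' |>.intervalIntegrable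
  have hderiv : ∀ u ∈ uIcc α y, HasDerivAt (fun u ↦ (u - α) ^ 2 / 2 * f' u - (u - α) * f u)
      (1 / 2 * ((u - α) ^ 2 * f'' u) - f u) u := fun u hu ↦ by
    have hlin : HasDerivAt (fun u ↦ u - α) 1 u := (hasDerivAt_id u).sub_const α
    have hsq : HasDerivAt (fun u ↦ (u - α) ^ 2 / 2) (u - α) u := by
      simpa using (hlin.pow 2).div_const 2
    exact ((hsq.mul (hf' u hu)).sub (hlin.mul (hf u hu))).congr_deriv (by ring)
  have := integral_eq_sub_of_hasDerivAt hderiv ((hint.const_mul _).sub hfc.intervalIntegrable)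
  rw [integral_sub (hint.const_mul _) hfc.intervalIntegrable,
    intervalIntegral.integral_const_mul] at this
  simp only [sub_self] at this
  linear_combination -this

lemma integral_sq_sub_mul_eq (g : ℝ → ℝ) (c x : ℝ) :
    ∫ u in c..x, (u - c) ^ 2 * g u
      = (x - c) ^ 3 * ∫ t in (0:ℝ)..1, t ^ 2 * g (t * x + (1 - t) * c) := by
  have := smul_integral_comp_mul_add (fun u ↦ (u - c) ^ 2 * g u) (x - c) c (a := 0) (b := 1)
  simp only [mul_zero, zero_add, mul_one, sub_add_cancel, smul_eq_mul, add_sub_cancel_right] at this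
  rw [← this, ← intervalIntegral.integral_const_mul, ← intervalIntegral.integral_const_mul]
  congr 1 with t
  ring_nf

lemma integral_eq_add_half_cube_mul_integral {α y : ℝ}
    (hf : ∀ u ∈ uIcc α y, HasDerivAt f (f' u) u) (hf' : ∀ u ∈ uIcc α y, HasDerivAt f' (f'' u) u)
    (hf'' : ContinuousOn f'' (uIcc α y)) :
    ∫ u in α..y, f u = (y - α) * f y - (y - α) ^ 2 / 2 * f' y
      + (y - α) ^ 3 / 2 * ∫ t in (0:ℝ)..1, t ^ 2 * f'' (t * y + (1 - t) * α) := by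
  rw [integral_eq_add_half_integral_sq_mul hf hf' hf'', integral_sq_sub_mul_eq]
  ring

lemma average_sub_eq_integral_sq_mul {a b x : ℝ} (hab : a ≠ b) (hx : x ∈ uIcc a b)
    (hf : ∀ u ∈ uIcc a b, HasDerivAt f (f' u) u) (hf' : ∀ u ∈ uIcc a b, HasDerivAt f' (f'' u) u)
    (hf'' : ContinuousOn f'' (uIcc a b)) :
    1 / (b - a) * (∫ t in a..b, f t) - f x + (2 * x - a - b) / 2 * f' x
      = 1 / (2 * (b - a)) * ((x - a) ^ 3 * (∫ t in (0:ℝ)..1, t ^ 2 * f'' (t * x + (1 - t) * a))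
        + (b - x) ^ 3 * ∫ t in (0:ℝ)..1, t ^ 2 * f'' (t * x + (1 - t) * b)) := by
  have hax : uIcc a x ⊆ uIcc a b := uIcc_subset_uIcc_left hx
  have hbx : uIcc b x ⊆ uIcc a b := uIcc_comm a b ▸ uIcc_subset_uIcc_left (uIcc_comm a b ▸ hx)
  have hfc : ContinuousOn f (uIcc a b) :=
    continuousOn_of_forall_continuousAt fun u hu ↦ (hf u hu).continuousAt
  have hsplit : ∫ t in a..b, f t = (∫ t in a..x, f t) - ∫ t in b..x, f t := by
    rw [integral_symm x b, sub_neg_eq_add, integral_add_adjacent_intervals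
      ((hfc.mono hax).intervalIntegrable) ((hfc.mono (uIcc_comm x b ▸ hbx)).intervalIntegrable)]
  rw [hsplit, integral_eq_add_half_cube_mul_integral (fun u hu ↦ hf u (hax hu))
    (fun u hu ↦ hf' u (hax hu)) (hf''.mono hax),
    integral_eq_add_half_cube_mul_integral (fun u hu ↦ hf u (hbx hu))
    (fun u hu ↦ hf' u (hbx hu)) (hf''.mono hbx)]
  have : b - a ≠ 0 := sub_ne_zero.mpr hab.symm
  field_simp
  ring

end Identity

lemma ContDiffOn.hasDerivAt_deriv_and_continuousOn_deriv_deriv {f : ℝ → ℝ} {U : Set ℝ}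
    (hf : ContDiffOn ℝ 2 f U) (hU : IsOpen U) :
    (∀ u ∈ U, HasDerivAt f (deriv f u) u) ∧ (∀ u ∈ U, HasDerivAt (deriv f) (deriv (deriv f) u) u)
      ∧ ContinuousOn (deriv (deriv f)) U := by
  have hf1 : ContDiffOn ℝ 1 (deriv f) U := hf.deriv_of_isOpen hU (by norm_num)
  refine ⟨fun u hu ↦ ?_, fun u hu ↦ ?_,
    (hf1.deriv_of_isOpen (m := 0) hU (by norm_num)).continuousOn⟩
  · exact ((hf.differentiableOn two_ne_zero).differentiableAt (hU.mem_nhds hu)).hasDerivAt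
  · exact ((hf1.differentiableOn one_ne_zero).differentiableAt (hU.mem_nhds hu)).hasDerivAt

lemma mul_add_one_sub_mul_mem_Icc {a b x c t : ℝ} (hx : x ∈ Icc a b) (hc : c ∈ Icc a b)
    (ht : t ∈ Icc (0:ℝ) 1) : t * x + (1 - t) * c ∈ Icc a b := by
  simpa using convex_Icc a b hx hc ht.1 (sub_nonneg.2 ht.2) (add_sub_cancel t 1)

theorem stmt_9_general (f : ℝ → ℝ) (a b : ℝ) (s q : ℝ) (hs : s ∈ Set.Ioo (0:ℝ) 1) (hq : 1 ≤ q)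
    (hab : a < b)
    (U : Set ℝ) (hU : IsOpen U) (hsub : Set.Icc a b ⊆ U) (hf : ContDiffOn ℝ 2 f U)
    (hsc : ∀ u ∈ Set.Icc a b, ∀ v ∈ Set.Icc a b, ∀ l ∈ Set.Icc (0:ℝ) 1,
      |deriv (deriv f) (l*u + (1-l)*v)| ^ q ≤
        l ^ s * |deriv (deriv f) u| ^ q + (1-l) ^ s * |deriv (deriv f) v| ^ q) :
    ∀ x ∈ Set.Icc a b,
      |(1/(b-a)) * (∫ t in a..b, f t) - f x + ((2*x - a - b)/2) * deriv f x|
        ≤ (1/3 : ℝ) ^ (1 - 1/q) * (1/(2*(b-a))) *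
            ((x-a)^3 * ((1/(s+3)) * |deriv (deriv f) x| ^ q
                + (1/(s+3) - 2/(s+2) + 1/(s+1)) * |deriv (deriv f) a| ^ q) ^ (1/q)
             + (b-x)^3 * ((1/(s+3)) * |deriv (deriv f) x| ^ q
                + (1/(s+3) - 2/(s+2) + 1/(s+1)) * |deriv (deriv f) b| ^ q) ^ (1/q)) := by
  intro x hx
  obtain ⟨hd, hd2, hc⟩ := hf.hasDerivAt_deriv_and_continuousOn_deriv_deriv hU
  have hIcc : uIcc a b = Icc a b := uIcc_of_le hab.le
  have hside : ∀ c ∈ Icc a b, |∫ t in (0:ℝ)..1, t ^ 2 * deriv (deriv f) (t * x + (1 - t) * c)|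
      ≤ (1 / 3 : ℝ) ^ (1 - 1 / q) * (1 / (s + 3) * |deriv (deriv f) x| ^ q
        + (1 / (s + 3) - 2 / (s + 2) + 1 / (s + 1)) * |deriv (deriv f) c| ^ q) ^ (1 / q) :=
    fun c hc' ↦ abs_integral_sq_mul_le
      ((hc.mono hsub).comp (by fun_prop) fun t ht ↦ mul_add_one_sub_mul_mem_Icc hx hc' ht)
      hq (by linarith [hs.1]) fun t ht ↦ hsc x hx c hc' t ht
  rw [average_sub_eq_integral_sq_mul hab.ne (hIcc ▸ hx) (fun u hu ↦ hd u (hsub (hIcc ▸ hu)))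
    (fun u hu ↦ hd2 u (hsub (hIcc ▸ hu))) (hIcc ▸ hc.mono hsub)]
  set Ia := ∫ t in (0:ℝ)..1, t ^ 2 * deriv (deriv f) (t * x + (1 - t) * a)
  set Ib := ∫ t in (0:ℝ)..1, t ^ 2 * deriv (deriv f) (t * x + (1 - t) * b)
  have hxa : 0 ≤ (x - a) ^ 3 := pow_nonneg (by linarith [hx.1]) 3
  have hbx : 0 ≤ (b - x) ^ 3 := pow_nonneg (by linarith [hx.2]) 3
  have hba : 0 < 1 / (2 * (b - a)) := by have := sub_pos.2 hab; positivity
  calc _ = 1 / (2 * (b - a)) * |(x - a) ^ 3 * Ia + (b - x) ^ 3 * Ib| := by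
        rw [abs_mul, abs_of_pos hba]
    _ ≤ 1 / (2 * (b - a)) * ((x - a) ^ 3 * |Ia| + (b - x) ^ 3 * |Ib|) := by
        grw [abs_add_le, abs_mul, abs_mul, abs_of_nonneg hxa, abs_of_nonneg hbx]
    _ ≤ _ := by
        grw [hside a (left_mem_Icc.2 hab.le), hside b (right_mem_Icc.2 hab.le)]
        exact le_of_eq (by ring)

theorem stmt_9 (f : ℝ → ℝ) (a b : ℝ) (s q : ℝ) (hs : s ∈ Set.Ioo (0:ℝ) 1) (hq : 1 ≤ q)
    (ha : 0 ≤ a) (hb : 0 ≤ b) (hab : a < b)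
    (U : Set ℝ) (hU : IsOpen U) (hsub : Set.Icc a b ⊆ U) (hf : ContDiffOn ℝ 2 f U)
    (hsc : ∀ u ∈ Set.Icc a b, ∀ v ∈ Set.Icc a b, ∀ l ∈ Set.Icc (0:ℝ) 1,
      |deriv (deriv f) (l*u + (1-l)*v)| ^ q ≤
        l ^ s * |deriv (deriv f) u| ^ q + (1-l) ^ s * |deriv (deriv f) v| ^ q) :
    ∀ x ∈ Set.Icc a b,
      |(1/(b-a)) * (∫ t in a..b, f t) - f x + ((2*x - a - b)/2) * deriv f x|
        ≤ (1/3 : ℝ) ^ (1 - 1/q) * (1/(2*(b-a))) *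
            ((x-a)^3 * ((1/(s+3)) * |deriv (deriv f) x| ^ q
                + (1/(s+3) - 2/(s+2) + 1/(s+1)) * |deriv (deriv f) a| ^ q) ^ (1/q)
             + (b-x)^3 * ((1/(s+3)) * |deriv (deriv f) x| ^ q
                + (1/(s+3) - 2/(s+2) + 1/(s+1)) * |deriv (deriv f) b| ^ q) ^ (1/q)) :=
  stmt_9_general f a b s q hs hq hab U hU hsub hf hsc
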